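/- arXiv:2102.02990 — 2 statements merged into one kernel-verified Lean document; each statement's English description precedes it below -/
import Mathlib

section
/- For every star expression e over an action set A, the 1-chart interpretation C1(e) satisfies the loop existence and elimination property LEE. -/
universe u v w

/-- Star expressions over a set `A` of actions. -/
inductive StExp (A : Type u) : Type u
  | zero : StExp A
  | one : StExp A
  | act : A → StExp A
  | add : StExp A → StExp A → StExp A
  | mul : StExp A → StExp A → StExp A
  | star : StExp A → StExp A

namespace StExp

variable {A : Type u}

/-- Immediate termination in Milner's TSS `T(A)`. -/
inductive Term : StExp A → Prop
  | one : Term StExp.one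
  | addL {e₁ e₂ : StExp A} : Term e₁ → Term (StExp.add e₁ e₂)
  | addR {e₁ e₂ : StExp A} : Term e₂ → Term (StExp.add e₁ e₂)
  | mul {e₁ e₂ : StExp A} : Term e₁ → Term e₂ → Term (StExp.mul e₁ e₂)
  | star {e : StExp A} : Term (StExp.star e)

/-- Transitions in Milner's TSS `T(A)`. -/
inductive Step : StExp A → A → StExp A → Prop
  | act {a : A} : Step (StExp.act a) a StExp.one
  | addL {e₁ e₂ e' : StExp A} {a : A} : Step e₁ a e' → Step (StExp.add e₁ e₂) a e'
  | addR {e₁ e₂ e' : StExp A} {a : A} : Step e₂ a e' → Step (StExp.add e₁ e₂) a e'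
  | mulL {e₁ e₂ e₁' : StExp A} {a : A} :
      Step e₁ a e₁' → Step (StExp.mul e₁ e₂) a (StExp.mul e₁' e₂)
  | mulR {e₁ e₂ e₂' : StExp A} {a : A} :
      Term e₁ → Step e₂ a e₂' → Step (StExp.mul e₁ e₂) a e₂'
  | star {e e' : StExp A} {a : A} :
      Step e a e' → Step (StExp.star e) a (StExp.mul e' (StExp.star e))

/-- (Syntactic) star height. -/
def height : StExp A → ℕ
  | .zero => 0
  | .one => 0
  | .act _ => 0
  | .add e₁ e₂ => max e₁.height e₂.height
  | .mul e₁ e₂ => max e₁.height e₂.height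
  | .star e => e.height + 1

end StExp

/-- Stacked star expressions: `E ::= e | E·e | E * e*`. -/
inductive SExp (A : Type u) : Type u
  | up : StExp A → SExp A
  | pr : SExp A → StExp A → SExp A
  | st : SExp A → StExp A → SExp A

namespace SExp

variable {A : Type u}

/-- Projection to star expressions, interpreting `*` as `·`. -/
def proj : SExp A → StExp A
  | .up e => e
  | .pr E e => StExp.mul E.proj e
  | .st E e => StExp.mul E.proj (StExp.star e)

/-- `E` is a star expression (contains no stacked product `*`). -/
def IsStExp : SExp A → Prop
  | .up _ => True
  | .pr E _ => IsStExp E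
  | .st _ _ => False

/-- Star expressions that are not products (canonical arguments of `up`). -/
def UpOk : StExp A → Prop
  | .mul _ _ => False
  | _ => True

/-- Canonical stacked star expressions: products of star expressions are
represented by `pr` rather than by `up` applied to `StExp.mul`. -/
def Canonical : SExp A → Prop
  | .up e => UpOk e
  | .pr E _ => Canonical E
  | .st E _ => Canonical E

/-- Canonical embedding of star expressions into stacked star expressions. -/
def flatUp : StExp A → SExp A
  | .mul e₁ e₂ => SExp.pr (flatUp e₁) e₂
  | e => SExp.up e

/-- Immediate termination for stacked star expressions (TSS `T̲^(*)(A)`). -/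
inductive STerm : SExp A → Prop
  | up {e : StExp A} : StExp.Term e → STerm (SExp.up e)
  | pr {E : SExp A} {e : StExp A} : STerm E → StExp.Term e → STerm (SExp.pr E e)

/-- Transitions of the TSS `T̲^(*)(A)`; labels in `Option A`, where `none`
is the empty-step label `1`. -/
inductive SStep : SExp A → Option A → SExp A → Prop
  | act {a : A} : SStep (SExp.up (StExp.act a)) (some a) (SExp.up StExp.one)
  | addL {e₁ e₂ : StExp A} {a : A} {E' : SExp A} :
      SStep (SExp.up e₁) (some a) E' → SStep (SExp.up (StExp.add e₁ e₂)) (some a) E'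
  | addR {e₁ e₂ : StExp A} {a : A} {E' : SExp A} :
      SStep (SExp.up e₂) (some a) E' → SStep (SExp.up (StExp.add e₁ e₂)) (some a) E'
  | upMulL {e₁ e₂ : StExp A} {l : Option A} {E₁' : SExp A} :
      SStep (SExp.up e₁) l E₁' → SStep (SExp.up (StExp.mul e₁ e₂)) l (SExp.pr E₁' e₂)
  | upMulR {e₁ e₂ : StExp A} {a : A} {E₂' : SExp A} :
      StExp.Term e₁ → SStep (SExp.up e₂) (some a) E₂' →
      SStep (SExp.up (StExp.mul e₁ e₂)) (some a) E₂'
  | upStar {e : StExp A} {a : A} {E' : SExp A} :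
      SStep (SExp.up e) (some a) E' →
      SStep (SExp.up (StExp.star e)) (some a) (SExp.st E' e)
  | prL {E₁ E₁' : SExp A} {e₂ : StExp A} {l : Option A} :
      SStep E₁ l E₁' → SStep (SExp.pr E₁ e₂) l (SExp.pr E₁' e₂)
  | prR {E₁ E₂' : SExp A} {e₂ : StExp A} {a : A} :
      STerm E₁ → SStep (SExp.up e₂) (some a) E₂' → SStep (SExp.pr E₁ e₂) (some a) E₂'
  | stL {E₁ E₁' : SExp A} {e₂ : StExp A} {l : Option A} :
      SStep E₁ l E₁' → SStep (SExp.st E₁ e₂) l (SExp.st E₁' e₂)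
  | stOne {E₁ : SExp A} {e₂ : StExp A} :
      STerm E₁ → SStep (SExp.st E₁ e₂) none (SExp.up (StExp.star e₂))

/-- `1`-transition. -/
def OneStep (E F : SExp A) : Prop := SStep E none F

/-- Transition with an arbitrary label in `A ∪ {1}`. -/
def AStep (E F : SExp A) : Prop := ∃ l, SStep E l F

/-- Induced (proper) transition `E ⇒a E'`: a sequence of `1`-transitions
followed by an `a`-transition. -/
def IStep (E : SExp A) (a : A) (E' : SExp A) : Prop :=
  ∃ F, Relation.ReflTransGen OneStep E F ∧ SStep F (some a) E'

/-- Induced termination `E ↓(1)`: a sequence of `1`-transitions ending in a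
terminating expression. -/
def ITerm (E : SExp A) : Prop :=
  ∃ F, Relation.ReflTransGen OneStep E F ∧ STerm F

/-- `E` is normed: a path to an expression with immediate termination. -/
def Normed (E : SExp A) : Prop :=
  ∃ F, Relation.ReflTransGen AStep E F ∧ STerm F

/-- `E` is normed⁺: a nonempty sequence of induced transitions to an
expression with induced termination. -/
def NormedP (E : SExp A) : Prop :=
  ∃ F, Relation.TransGen (fun X Y => ∃ a : A, IStep X a Y) E F ∧ ITerm F

/-- Induced termination as derived in the extension `T̲ind^(*)(A)`. -/
inductive IndTerm : SExp A → Prop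
  | base {E : SExp A} : STerm E → IndTerm E
  | step {E F : SExp A} : SStep E none F → IndTerm F → IndTerm E

/-- Induced transitions as derived in the extension `T̲ind^(*)(A)`. -/
inductive IndStep : SExp A → A → SExp A → Prop
  | base {E E' : SExp A} {a : A} : SStep E (some a) E' → IndStep E a E'
  | step {E F E' : SExp A} {a : A} : SStep E none F → IndStep F a E' → IndStep E a E'

/-- Marked transitions of the TSS `T̲̂^(*)(A)`: marking label `0` means a body
(`bo`) transition, `n ≥ 1` a loop-entry transition of level `n`. -/
inductive MStep : SExp A → Option A × ℕ → SExp A → Prop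
  | act {a : A} : MStep (SExp.up (StExp.act a)) (some a, 0) (SExp.up StExp.one)
  | addL {e₁ e₂ : StExp A} {a : A} {n : ℕ} {E' : SExp A} :
      MStep (SExp.up e₁) (some a, n) E' → MStep (SExp.up (StExp.add e₁ e₂)) (some a, 0) E'
  | addR {e₁ e₂ : StExp A} {a : A} {n : ℕ} {E' : SExp A} :
      MStep (SExp.up e₂) (some a, n) E' → MStep (SExp.up (StExp.add e₁ e₂)) (some a, 0) E'
  | upMulL {e₁ e₂ : StExp A} {l : Option A × ℕ} {E₁' : SExp A} :
      MStep (SExp.up e₁) l E₁' → MStep (SExp.up (StExp.mul e₁ e₂)) l (SExp.pr E₁' e₂)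
  | upMulR {e₁ e₂ : StExp A} {a : A} {n : ℕ} {E₂' : SExp A} :
      StExp.Term e₁ → MStep (SExp.up e₂) (some a, n) E₂' →
      MStep (SExp.up (StExp.mul e₁ e₂)) (some a, 0) E₂'
  | upStarP {e : StExp A} {a : A} {n : ℕ} {E' : SExp A} :
      NormedP (SExp.up e) → MStep (SExp.up e) (some a, n) E' →
      MStep (SExp.up (StExp.star e)) (some a, e.height + 1) (SExp.st E' e)
  | upStarN {e : StExp A} {a : A} {n : ℕ} {E' : SExp A} :
      ¬ NormedP (SExp.up e) → MStep (SExp.up e) (some a, n) E' →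
      MStep (SExp.up (StExp.star e)) (some a, 0) (SExp.st E' e)
  | prL {E₁ E₁' : SExp A} {e₂ : StExp A} {l : Option A × ℕ} :
      MStep E₁ l E₁' → MStep (SExp.pr E₁ e₂) l (SExp.pr E₁' e₂)
  | prR {E₁ E₂' : SExp A} {e₂ : StExp A} {a : A} {n : ℕ} :
      STerm E₁ → MStep (SExp.up e₂) (some a, n) E₂' →
      MStep (SExp.pr E₁ e₂) (some a, 0) E₂'
  | stL {E₁ E₁' : SExp A} {e₂ : StExp A} {l : Option A × ℕ} :
      MStep E₁ l E₁' → MStep (SExp.st E₁ e₂) l (SExp.st E₁' e₂)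
  | stOne {E₁ : SExp A} {e₂ : StExp A} :
      STerm E₁ → MStep (SExp.st E₁ e₂) (none, 0) (SExp.up (StExp.star e₂))

/-- Body transition `→bo`. -/
def BStep (E F : SExp A) : Prop := ∃ l : Option A, MStep E (l, 0) F

/-- Star height of stacked star expressions. -/
def heightS : SExp A → ℕ
  | .up e => e.height
  | .pr E e => max E.heightS e.height
  | .st E e => max E.heightS (e.height + 1)

end SExp

/-- Applicative contexts of stacked star expressions. -/
inductive AppCtx (A : Type u) : Type u
  | hole : AppCtx A
  | pr : AppCtx A → StExp A → AppCtx A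
  | st : AppCtx A → StExp A → AppCtx A

/-- Filling the hole of an applicative context. -/
def AppCtx.fill {A : Type u} : AppCtx A → SExp A → SExp A
  | .hole, E => E
  | .pr C e, E => SExp.pr (C.fill E) e
  | .st C e, E => SExp.st (C.fill E) e

/-- A labeled transition system with termination. -/
structure LTS (S : Type u) (L : Type v) where
  step : S → L → S → Prop
  term : S → Prop

/-- Bisimulation between two LTSs with termination. -/
def IsBisimulation {S₁ : Type u} {S₂ : Type v} {L : Type w}
    (M₁ : LTS S₁ L) (M₂ : LTS S₂ L) (B : S₁ → S₂ → Prop) : Prop :=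
  (∃ s₁ s₂, B s₁ s₂) ∧
  ∀ s₁ s₂, B s₁ s₂ →
    ((∀ a s₁', M₁.step s₁ a s₁' → ∃ s₂', M₂.step s₂ a s₂' ∧ B s₁' s₂') ∧
     (∀ a s₂', M₂.step s₂ a s₂' → ∃ s₁', M₁.step s₁ a s₁' ∧ B s₁' s₂') ∧
     (M₁.term s₁ ↔ M₂.term s₂))

/-- The star expressions LTS `L(StExp(A))`. -/
def stexpLTS (A : Type u) : LTS (StExp A) A := ⟨StExp.Step, StExp.Term⟩

/-- The induced LTS of the stacked star expressions 1-LTS `L1(StExp^(*)(A))`. -/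
def indSExpLTS (A : Type u) : LTS (SExp A) A := ⟨SExp.IStep, SExp.ITerm⟩

/-- A (rooted) chart. -/
structure Chart (V : Type u) (L : Type v) where
  verts : Set V
  start : V
  step : V → L → V → Prop
  term : V → Prop

/-- Bisimulation between two charts: a bisimulation between the underlying
LTSs that relates the start vertices. -/
def IsChartBisim {V₁ : Type u} {V₂ : Type v} {L : Type w}
    (C₁ : Chart V₁ L) (C₂ : Chart V₂ L) (B : V₁ → V₂ → Prop) : Prop :=
  (∀ x y, B x y → x ∈ C₁.verts ∧ y ∈ C₂.verts) ∧
  B C₁.start C₂.start ∧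
  ∀ x y, B x y →
    ((∀ a x', C₁.step x a x' → ∃ y', C₂.step y a y' ∧ B x' y') ∧
     (∀ a y', C₂.step y a y' → ∃ x', C₁.step x a x' ∧ B x' y') ∧
     (C₁.term x ↔ C₂.term y))

def ChartBisimilar {V₁ : Type u} {V₂ : Type v} {L : Type w}
    (C₁ : Chart V₁ L) (C₂ : Chart V₂ L) : Prop :=
  ∃ B, IsChartBisim C₁ C₂ B

/-- Star expressions reachable from `e` in Milner's LTS. -/
def MReach {A : Type u} (e : StExp A) : Set (StExp A) :=
  {f | Relation.ReflTransGen (fun x y => ∃ a, StExp.Step x a y) e f}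

/-- The chart interpretation `C(e)` of a star expression. -/
def chartInt {A : Type u} (e : StExp A) : Chart (StExp A) A where
  verts := MReach e
  start := e
  step x a y := x ∈ MReach e ∧ StExp.Step x a y
  term x := x ∈ MReach e ∧ StExp.Term x

/-- Stacked star expressions reachable from (the canonical representation of)
`e` in the 1-LTS. -/
def SReach {A : Type u} (e : StExp A) : Set (SExp A) :=
  {F | Relation.ReflTransGen SExp.AStep (SExp.flatUp e) F}

/-- The 1-chart interpretation `C1(e)` of a star expression. -/
def oneChartInt {A : Type u} (e : StExp A) : Chart (SExp A) (Option A) where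
  verts := SReach e
  start := SExp.flatUp e
  step x l y := x ∈ SReach e ∧ SExp.SStep x l y
  term x := x ∈ SReach e ∧ SExp.STerm x

/-- The entry/body-labeled 1-chart interpretation `Ĉ1(e)`. -/
def markedOneChartInt {A : Type u} (e : StExp A) : Chart (SExp A) (Option A × ℕ) where
  verts := SReach e
  start := SExp.flatUp e
  step x l y := x ∈ SReach e ∧ SExp.MStep x l y
  term x := x ∈ SReach e ∧ SExp.STerm x

/-- The induced chart of a 1-chart: induced transitions and induced
termination. -/
def indChart {V : Type u} {A : Type v} (C : Chart V (Option A)) : Chart V A where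
  verts := C.verts
  start := C.start
  step x a y := ∃ u, Relation.ReflTransGen (fun s t => C.step s none t) x u ∧ C.step u (some a) y
  term x := ∃ u, Relation.ReflTransGen (fun s t => C.step s none t) x u ∧ C.term u

/-- An infinite path from the start vertex of a chart. -/
def IsInfPathFrom {V : Type u} {L : Type v} (C : Chart V L) (p : ℕ → V) : Prop :=
  p 0 = C.start ∧ ∀ i, ∃ l, C.step (p i) l (p (i + 1))

/-- Loop chart: (L1) an infinite path from the start vertex exists, (L2) every
infinite path from the start vertex returns to it after a positive number of
transitions, (L3) only the start vertex may terminate. -/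
def IsLoopChart {V : Type u} {L : Type v} (C : Chart V L) : Prop :=
  (∃ p, IsInfPathFrom C p) ∧
  (∀ p, IsInfPathFrom C p → ∃ k, 0 < k ∧ p k = C.start) ∧
  (∀ w ∈ C.verts, C.term w → w = C.start)

namespace LLEE

variable {S : Type u} {L : Type v}

/-- Body transition of an entry/body-labeling. -/
def Body (step : S → L × ℕ → S → Prop) (x y : S) : Prop := ∃ l, step x (l, 0) y

/-- Entry transition of level `n` of an entry/body-labeling. -/
def Entry (step : S → L × ℕ → S → Prop) (n : ℕ) (x y : S) : Prop := ∃ l, step x (l, n) y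

/-- Vertices of the induced subchart at `(v, n)`: on paths that start with an
`→[n]` transition from `v`, continue with body transitions, and halt upon
revisiting `v`. -/
def loopVerts (step : S → L × ℕ → S → Prop) (v : S) (n : ℕ) : Set S :=
  insert v {w | ∃ u, Entry step n v u ∧
    Relation.ReflTransGen (fun x y => Body step x y ∧ x ≠ v) u w}

/-- The induced subchart at `(v, n)`. -/
def subchartAt (step : S → L × ℕ → S → Prop) (term : S → Prop) (v : S) (n : ℕ) :
    Chart S (L × ℕ) where
  verts := loopVerts step v n
  start := v
  step x l y :=
    (x = v ∧ l.2 = n ∧ step x l y) ∨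
    (x ∈ loopVerts step v n ∧ x ≠ v ∧ l.2 = 0 ∧ step x l y)
  term x := x ∈ loopVerts step v n ∧ term x

/-- LLEE-witness conditions (W1)–(W3) for an entry/body-labeled transition
system with transitions `step` and termination `term`. -/
def IsWitness (step : S → L × ℕ → S → Prop) (term : S → Prop) : Prop :=
  (¬ ∃ p : ℕ → S, ∀ i, Body step (p i) (p (i + 1))) ∧
  (∀ v n, 0 < n → (∃ w, Entry step n v w) → IsLoopChart (subchartAt step term v n)) ∧
  (∀ v n, 0 < n → (∃ w, Entry step n v w) →
    ∀ t, t ∈ loopVerts step v n → t ≠ v → ∀ m t', 0 < m → Entry step m t t' → m < n)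

end LLEE

namespace LEE

variable {V : Type u} {L : Type v}

/-- Vertices of the subchart generated from `v` by a set `U` of transitions
from `v`: paths start with a transition in `U` and continue (with arbitrary
transitions) until `v` is reached again. -/
def genVerts (C : Chart V L) (v : V) (U : Set (V × L × V)) : Set V :=
  insert v {w | ∃ u, (∃ l, (v, l, u) ∈ U) ∧
    Relation.ReflTransGen (fun x y => (∃ l, C.step x l y) ∧ x ≠ v) u w}

/-- The subchart generated from `v` by the transitions in `U`. -/
def genSubchart (C : Chart V L) (v : V) (U : Set (V × L × V)) : Chart V L where
  verts := genVerts C v U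
  start := v
  step x l y :=
    (x = v ∧ (v, l, y) ∈ U) ∨
    (x ∈ genVerts C v U ∧ x ≠ v ∧ C.step x l y)
  term x := x ∈ genVerts C v U ∧ C.term x

/-- `U` determines a loop subchart of `C` rooted at `v`. -/
def IsLoopSubchart (C : Chart V L) (v : V) (U : Set (V × L × V)) : Prop :=
  v ∈ C.verts ∧ U.Nonempty ∧
  (∀ t ∈ U, t.1 = v ∧ C.step t.1 t.2.1 t.2.2) ∧
  IsLoopChart (genSubchart C v U)

/-- Elimination of the loop-entry transitions in `U`, followed by removal of
all vertices and transitions that become unreachable. -/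
def elim (C : Chart V L) (U : Set (V × L × V)) : Chart V L :=
  let step' : V → L → V → Prop := fun x l y => C.step x l y ∧ (x, l, y) ∉ U
  let R : Set V := {w | Relation.ReflTransGen (fun x y => ∃ l, step' x l y) C.start w}
  { verts := C.verts ∩ R
    start := C.start
    step := fun x l y => step' x l y ∧ x ∈ R ∧ y ∈ R
    term := fun x => C.term x ∧ x ∈ R }

/-- One step of the loop elimination procedure. -/
def ElimStep (C C' : Chart V L) : Prop :=
  ∃ v U, IsLoopSubchart C v U ∧ C' = elim C U

/-- The chart has an infinite path. -/
def HasInfPath (C : Chart V L) : Prop :=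
  ∃ p : ℕ → V, p 0 ∈ C.verts ∧ ∀ i, ∃ l, C.step (p i) l (p (i + 1))

/-- The loop existence and elimination property LEE: repeated elimination of
loop subcharts results in a chart without an infinite path. -/
def SatisfiesLEE (C : Chart V L) : Prop :=
  ∃ C', Relation.ReflTransGen ElimStep C C' ∧ ¬ HasInfPath C'

end LEE

/-- A maximal path of body transitions from `X` in the entry/body-labeled
1-LTS: finite (of length `len`) or infinite (`len = ⊤`), and if finite then
not extensible by any further body transition. -/
structure BoPath (A : Type u) (X : SExp A) where
  len : ℕ∞
  f : ℕ → SExp A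
  head : f 0 = X
  steps : ∀ i : ℕ, (i : ℕ∞) < len → SExp.BStep (f i) (f (i + 1))
  maximal : ∀ n : ℕ, len = (n : ℕ∞) → ∀ Y, ¬ SExp.BStep (f n) Y

/-- Canonical stacked star expressions (the states of the stacked star
expressions 1-LTS `L1(StExp^(*)(A))`). -/
def CSExp (A : Type u) : Type u := {E : SExp A // SExp.Canonical E}


/-!
Mark every transition of `C1(e)` as a body transition or as a loop-entry (`MStep`): a transition
entering an iteration `f*` is a loop-entry, of level the star height of `f*`, exactly when `f`
is normed⁺. Body transitions admit no infinite path: a body transition into `E * f*` means that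
`f` is not normed⁺, so `E * f*` can never terminate and its exit is never taken.

Loops are then eliminated in order of increasing level. At a vertex `C[f*]` with loop-entries of
least level, those entries lead into vertices `C[E * f*]` from which only body transitions
remain (any loop-entry there has level at most the star height of `f`), so every path returns to
`C[f*]` through the exit of `*` and none terminates; as `f` is normed⁺, the loop can be traversed.
Hence the entries at `C[f*]` generate a loop subchart, and each elimination removes one vertex
from the finite set of vertices that still have loop-entries.
-/

open Relation

theorem Relation.TransGen.exists_seq_of_self {α : Type*} {r : α → α → Prop} {a : α}
    (h : TransGen r a a) : ∃ p : ℕ → α, p 0 = a ∧ ∀ n, r (p n) (p (n + 1)) := by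
  refine (not_acc_iff_exists_descending_chain (r := flip r)).mp fun hacc => ?_
  have irrefl : ∀ x, Acc (TransGen (flip r)) x → ¬ TransGen (flip r) x x := fun x hx => by
    induction hx with
    | intro x _ ih => exact fun hxx => ih x hxx hxx
  exact irrefl a (acc_transGen_iff.mpr hacc) (transGen_swap.mpr h)

namespace LEE

variable {V : Type u} {L : Type v}

structure IsTrap (C : Chart V L) (v : V) (U : Set (V × L × V)) (I : Set V) : Prop where
  not_mem : v ∉ I
  mem_of_entry : ∀ l u, (v, l, u) ∈ U → u ∈ I
  mem_or_eq_of_step : ∀ x ∈ I, ∀ l y, C.step x l y → y ∈ I ∨ y = v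

namespace IsTrap

variable {C : Chart V L} {v : V} {U : Set (V × L × V)} {I : Set V}

theorem genVerts_subset (hT : IsTrap C v U I) : genVerts C v U ⊆ insert v I := by
  rintro w (rfl | ⟨u, ⟨l, hu⟩, hw⟩)
  · exact .inl rfl
  induction hw with
  | refl => exact .inr (hT.mem_of_entry l u hu)
  | tail _ hxy ih =>
      obtain ⟨⟨l', hxy⟩, hxv⟩ := hxy
      rcases ih with rfl | hx
      · exact absurd rfl hxv
      · exact (hT.mem_or_eq_of_step _ hx l' _ hxy).symm

theorem returns (hT : IsTrap C v U I)
    (hfin : ∀ p : ℕ → V, (∀ n, p n ∈ I) → ¬ ∀ n, ∃ l, C.step (p n) l (p (n + 1)))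
    {p : ℕ → V} (hp : IsInfPathFrom (genSubchart C v U) p) : ∃ k, 0 < k ∧ p k = v := by
  by_contra! hne
  obtain ⟨hp0, hstep⟩ := hp
  have hCstep : ∀ n, ∃ l, C.step (p (n + 1)) l (p (n + 2)) := fun n => by
    obtain ⟨l, ⟨hv, -⟩ | ⟨-, -, hC⟩⟩ := hstep (n + 1)
    exacts [absurd hv (hne _ n.succ_pos), ⟨l, hC⟩]
  have hmem : ∀ n, p (n + 1) ∈ I := by
    intro n
    induction n with
    | zero =>
        obtain ⟨l, ⟨-, hU⟩ | ⟨-, hv, -⟩⟩ := hstep 0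
        exacts [hT.mem_of_entry _ _ hU, absurd hp0 hv]
    | succ n ih =>
        obtain ⟨l, hC⟩ := hCstep n
        exact (hT.mem_or_eq_of_step _ ih _ _ hC).resolve_right (hne _ (by omega))
  exact hfin (fun n => p (n + 1)) hmem hCstep

theorem isLoopChart (hT : IsTrap C v U I) (hterm : ∀ x ∈ I, ¬ C.term x)
    (hfin : ∀ p : ℕ → V, (∀ n, p n ∈ I) → ¬ ∀ n, ∃ l, C.step (p n) l (p (n + 1)))
    (hinf : ∃ p, IsInfPathFrom (genSubchart C v U) p) : IsLoopChart (genSubchart C v U) :=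
  ⟨hinf, fun _ => hT.returns hfin,
    fun w _ ⟨hw, ht⟩ => (hT.genVerts_subset hw).resolve_right fun hwI => hterm w hwI ht⟩

end IsTrap

theorem exists_infPath_genSubchart {C : Chart V L} {v u w : V} {U : Set (V × L × V)} {l l' : L}
    (hu : (v, l, u) ∈ U) (huw : ReflTransGen (fun x y => (∃ l, C.step x l y) ∧ x ≠ v) u w)
    (hw : w ≠ v) (hwv : C.step w l' v) : ∃ p, IsInfPathFrom (genSubchart C v U) p := by
  have hmem : ∀ {x}, ReflTransGen (fun x y => (∃ l, C.step x l y) ∧ x ≠ v) u x →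
      x ∈ genVerts C v U := fun hux => .inr ⟨u, ⟨l, hu⟩, hux⟩
  have hpath : ∀ x, ReflTransGen (fun x y => (∃ l, C.step x l y) ∧ x ≠ v) u x →
      TransGen (fun x y => ∃ l, (genSubchart C v U).step x l y) v x := by
    intro x hux
    induction hux with
    | refl => exact .single ⟨l, .inl ⟨rfl, hu⟩⟩
    | tail hux hxy ih =>
        obtain ⟨⟨l₁, hxy⟩, hxv⟩ := hxy
        exact ih.tail ⟨l₁, .inr ⟨hmem hux, hxv, hxy⟩⟩
  exact ((hpath w huw).tail ⟨l', .inr ⟨hmem huw, hw, hwv⟩⟩).exists_seq_of_self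

theorem elim_step_of_step {C : Chart V L} {U : Set (V × L × V)}
    {x y : V} {l : L} (hx : x ∈ (elim C U).verts) (h : C.step x l y) (hU : (x, l, y) ∉ U) :
    (elim C U).step x l y :=
  ⟨⟨h, hU⟩, hx.2, hx.2.tail ⟨l, h, hU⟩⟩

end LEE

namespace SExp

variable {A : Type u}

theorem SStep.canonical {X Y : SExp A} {l : Option A} (h : SStep X l Y) : Canonical Y := by
  induction h <;> trivial

theorem canonical_flatUp : ∀ e : StExp A, Canonical (flatUp e)
  | .mul e₁ _ => canonical_flatUp e₁
  | .zero | .one | .act _ | .add _ _ | .star _ => trivial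

theorem not_sStep_up_none {f : StExp A} {F : SExp A} : ¬ SStep (up f) none F := by
  induction f generalizing F with
  | mul e₁ e₂ ih₁ _ => intro h; cases h with | upMulL h => exact ih₁ h
  | _ => intro h; cases h

theorem MStep.sStep {X Y : SExp A} {lm : Option A × ℕ} (h : MStep X lm Y) :
    SStep X lm.1 Y := by
  induction h with
  | act => exact .act
  | addL _ ih => exact .addL ih
  | addR _ ih => exact .addR ih
  | upMulL _ ih => exact .upMulL ih
  | upMulR ht _ ih => exact .upMulR ht ih
  | upStarP _ _ ih => exact .upStar ih
  | upStarN _ _ ih => exact .upStar ih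
  | prL _ ih => exact .prL ih
  | prR ht _ ih => exact .prR ht ih
  | stL _ ih => exact .stL ih
  | stOne ht => exact .stOne ht

theorem SStep.exists_mStep {X Y : SExp A} {l : Option A} (h : SStep X l Y) :
    ∃ m, MStep X (l, m) Y := by
  induction h with
  | act => exact ⟨0, .act⟩
  | addL _ ih => obtain ⟨_, hm⟩ := ih; exact ⟨0, .addL hm⟩
  | addR _ ih => obtain ⟨_, hm⟩ := ih; exact ⟨0, .addR hm⟩
  | upMulL _ ih => obtain ⟨m, hm⟩ := ih; exact ⟨m, .upMulL hm⟩
  | upMulR ht _ ih => obtain ⟨_, hm⟩ := ih; exact ⟨0, .upMulR ht hm⟩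
  | @upStar e _ _ _ ih =>
      obtain ⟨_, hm⟩ := ih
      by_cases hn : NormedP (up e)
      · exact ⟨e.height + 1, .upStarP hn hm⟩
      · exact ⟨0, .upStarN hn hm⟩
  | prL _ ih => obtain ⟨m, hm⟩ := ih; exact ⟨m, .prL hm⟩
  | prR ht _ ih => obtain ⟨_, hm⟩ := ih; exact ⟨0, .prR ht hm⟩
  | stL _ ih => obtain ⟨m, hm⟩ := ih; exact ⟨m, .stL hm⟩
  | stOne ht => exact ⟨0, .stOne ht⟩

theorem MStep.snd_le_heightS {X Y : SExp A} {lm : Option A × ℕ} (h : MStep X lm Y) :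
    lm.2 ≤ heightS X := by
  induction h <;> simp only [heightS, StExp.height] at * <;> omega

theorem SStep.heightS_le {X Y : SExp A} {l : Option A} (h : SStep X l Y) :
    heightS Y ≤ heightS X := by
  induction h <;> simp only [heightS, StExp.height] at * <;> omega

theorem SStep.sizeOf_lt_of_up_pr {b c : StExp A} {l : Option A} {X : SExp A}
    (h : SStep (up b) l (pr X c)) : sizeOf c < sizeOf b := by
  generalize hb : up b = B at h
  generalize hY : pr X c = Y at h
  induction h generalizing b with
  | addL _ ih | addR _ ih | upMulR _ _ ih =>
      cases hb
      have := ih rfl hY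
      simp only [StExp.add.sizeOf_spec, StExp.mul.sizeOf_spec]
      omega
  | upMulL => cases hb; cases hY; simp only [StExp.mul.sizeOf_spec]; omega
  | _ => cases hb <;> cases hY

theorem SStep.fill {X Y : SExp A} {l : Option A} (C : AppCtx A) (h : SStep X l Y) :
    SStep (C.fill X) l (C.fill Y) := by
  induction C with
  | hole => exact h
  | pr _ _ ih => exact .prL ih
  | st _ _ ih => exact .stL ih

theorem MStep.fill {X Y : SExp A} {lm : Option A × ℕ} (C : AppCtx A) (h : MStep X lm Y) :
    MStep (C.fill X) lm (C.fill Y) := by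
  induction C with
  | hole => exact h
  | pr _ _ ih => exact .prL ih
  | st _ _ ih => exact .stL ih

end SExp

namespace AppCtx

open SExp (SStep MStep STerm NormedP heightS)

variable {A : Type u}

theorem fill_injective (C : AppCtx A) : Function.Injective C.fill := by
  induction C with
  | hole => exact fun _ _ h => h
  | pr _ _ ih | st _ _ ih => exact fun _ _ h => ih (by injection h)

theorem fill_up_inj {C C' : AppCtx A} {f f' : StExp A}
    (h : C.fill (.up f) = C'.fill (.up f')) : C = C' ∧ f = f' := by
  induction C generalizing C' with
  | hole => cases C' <;> cases h; exact ⟨rfl, rfl⟩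
  | pr _ _ ih | st _ _ ih =>
      cases C' <;> first
        | cases h
        | injection h with h hb; obtain ⟨rfl, rfl⟩ := ih h; exact ⟨by rw [hb], rfl⟩

theorem fill_st_ne_fill_up {C : AppCtx A} {E : SExp A} {g f : StExp A} :
    C.fill (.st E g) ≠ C.fill (.up f) :=
  fun h => by cases C.fill_injective h

theorem not_sTerm_fill_st {C : AppCtx A} {E : SExp A} {g : StExp A} :
    ¬ STerm (C.fill (.st E g)) := by
  induction C with
  | hole => intro h; cases h
  | pr _ _ ih => intro h; cases h with | pr h _ => exact ih h
  | st _ _ ih => intro h; cases h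

theorem sStep_fill_st {C : AppCtx A} {E : SExp A} {g : StExp A} {l : Option A} {Y : SExp A}
    (h : SStep (C.fill (.st E g)) l Y) :
    (∃ E', SStep E l E' ∧ Y = C.fill (.st E' g)) ∨
      (STerm E ∧ l = none ∧ Y = C.fill (.up (.star g))) := by
  induction C generalizing Y with
  | hole =>
      cases h with
      | stL h => exact .inl ⟨_, h, rfl⟩
      | stOne ht => exact .inr ⟨ht, rfl, rfl⟩
  | pr _ _ ih =>
      cases h with
      | prL h =>
          rcases ih h with ⟨E', hs, rfl⟩ | ⟨ht, hl, rfl⟩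
          exacts [.inl ⟨E', hs, rfl⟩, .inr ⟨ht, hl, rfl⟩]
      | prR ht _ => exact absurd ht not_sTerm_fill_st
  | st _ _ ih =>
      cases h with
      | stL h =>
          rcases ih h with ⟨E', hs, rfl⟩ | ⟨ht, hl, rfl⟩
          exacts [.inl ⟨E', hs, rfl⟩, .inr ⟨ht, hl, rfl⟩]
      | stOne ht => exact absurd ht not_sTerm_fill_st

theorem mStep_fill_st_snd_le {C : AppCtx A} {E : SExp A} {g : StExp A}
    {lm : Option A × ℕ} {Y : SExp A} (h : MStep (C.fill (.st E g)) lm Y) :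
    lm.2 ≤ heightS E := by
  induction C generalizing Y with
  | hole =>
      cases h with
      | stL h => exact h.snd_le_heightS
      | stOne => exact Nat.zero_le _
  | pr _ _ ih | st _ _ ih => cases h <;> first | exact ih ‹_› | exact Nat.zero_le _

theorem not_mStep_fill_star_zero {C : AppCtx A} {g : StExp A} {E : SExp A} {l : Option A}
    (hg : NormedP (.up g)) : ¬ MStep (C.fill (.up (.star g))) (l, 0) (C.fill (.st E g)) := by
  induction C with
  | hole =>
      intro h
      cases h with
      | upStarN hn _ => exact hn hg
  | pr _ _ ih =>
      intro h
      cases h with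
      | prL h => exact ih h
      | prR _ h => exact lt_irrefl _ h.sStep.sizeOf_lt_of_up_pr
  | st _ _ ih =>
      intro h
      cases h with
      | stL h => exact ih h

end AppCtx

namespace SExp

variable {A : Type u}

theorem MStep.exists_fill_star {X Y : SExp A} {l : Option A} {m : ℕ}
    (h : MStep X (l, m) Y) (hX : Canonical X) (hm : 0 < m) :
    ∃ (C : AppCtx A) (g : StExp A) (E : SExp A),
      X = C.fill (up (.star g)) ∧ Y = C.fill (st E g) ∧ m = g.height + 1 ∧
      NormedP (up g) ∧ heightS E ≤ g.height := by
  generalize hlm : (l, m) = lm at h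
  induction h generalizing l m with
  | upStarP hg h => cases hlm; exact ⟨.hole, _, _, rfl, rfl, rfl, hg, h.sStep.heightS_le⟩
  | @prL _ _ b _ _ ih =>
      obtain ⟨C, g, E, rfl, rfl, hm', hg, hE⟩ := ih hX hm hlm
      exact ⟨.pr C b, g, E, rfl, rfl, hm', hg, hE⟩
  | @stL _ _ b _ _ ih =>
      obtain ⟨C, g, E, rfl, rfl, hm', hg, hE⟩ := ih hX hm hlm
      exact ⟨.st C b, g, E, rfl, rfl, hm', hg, hE⟩
  | upMulL => exact hX.elim
  | _ => cases hlm; exact absurd hm (lt_irrefl 0)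

def derivatives : StExp A → Set (SExp A)
  | .zero => {up .zero}
  | .one => {up .one}
  | .act a => {up (.act a), up .one}
  | .add e₁ e₂ => insert (up (.add e₁ e₂)) (derivatives e₁ ∪ derivatives e₂)
  | .mul e₁ e₂ =>
      insert (up (.mul e₁ e₂)) ((pr · e₂) '' derivatives e₁ ∪ derivatives e₂)
  | .star f => insert (up (.star f)) ((st · f) '' derivatives f)

theorem up_mem_derivatives (e : StExp A) : up e ∈ derivatives e := by
  cases e <;> simp [derivatives]

theorem flatUp_mem_derivatives (e : StExp A) : flatUp e ∈ derivatives e := by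
  induction e with
  | mul e₁ e₂ ih₁ _ => exact .inr (.inl ⟨_, ih₁, rfl⟩)
  | _ => exact up_mem_derivatives _

theorem derivatives_finite (e : StExp A) : (derivatives e).Finite := by
  induction e with
  | zero | one => exact Set.finite_singleton _
  | act a => exact (Set.finite_singleton _).insert _
  | add e₁ e₂ ih₁ ih₂ => exact (ih₁.union ih₂).insert _
  | mul e₁ e₂ ih₁ ih₂ => exact ((ih₁.image _).union ih₂).insert _
  | star f ih => exact (ih.image _).insert _

theorem mem_derivatives_of_sStep {e : StExp A} {F G : SExp A} {l : Option A}
    (hF : F ∈ derivatives e) (h : SStep F l G) : G ∈ derivatives e := by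
  induction e generalizing F G l with
  | zero | one => cases hF; cases h
  | act a =>
      rcases hF with rfl | rfl <;> cases h
      exact .inr rfl
  | add e₁ e₂ ih₁ ih₂ =>
      rcases hF with rfl | hF | hF
      · cases h with
        | addL h => exact .inr (.inl (ih₁ (up_mem_derivatives e₁) h))
        | addR h => exact .inr (.inr (ih₂ (up_mem_derivatives e₂) h))
      · exact .inr (.inl (ih₁ hF h))
      · exact .inr (.inr (ih₂ hF h))
  | mul e₁ e₂ ih₁ ih₂ =>
      rcases hF with rfl | ⟨E, hE, rfl⟩ | hF
      · cases h with
        | upMulL h => exact .inr (.inl ⟨_, ih₁ (up_mem_derivatives e₁) h, rfl⟩)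
        | upMulR _ h => exact .inr (.inr (ih₂ (up_mem_derivatives e₂) h))
      · cases h with
        | prL h => exact .inr (.inl ⟨_, ih₁ hE h, rfl⟩)
        | prR _ h => exact .inr (.inr (ih₂ (up_mem_derivatives e₂) h))
      · exact .inr (.inr (ih₂ hF h))
  | star f ih =>
      rcases hF with rfl | ⟨E, hE, rfl⟩
      · cases h with
        | upStar h => exact .inr ⟨_, ih (up_mem_derivatives f) h, rfl⟩
      · cases h with
        | stL h => exact .inr ⟨_, ih hE h, rfl⟩
        | stOne _ => exact .inl rfl

theorem sReach_subset_derivatives (e : StExp A) : SReach e ⊆ derivatives e := by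
  intro F hF
  induction hF with
  | refl => exact flatUp_mem_derivatives e
  | tail _ h ih => obtain ⟨_, h⟩ := h; exact mem_derivatives_of_sStep ih h

theorem canonical_of_mem_sReach {e : StExp A} {F : SExp A} (hF : F ∈ SReach e) :
    Canonical F := by
  induction hF with
  | refl => exact canonical_flatUp e
  | tail _ h => obtain ⟨_, h⟩ := h; exact h.canonical

theorem reflTransGen_aStep_of_oneStep {X Y : SExp A} (h : ReflTransGen OneStep X Y) :
    ReflTransGen AStep X Y :=
  ReflTransGen.mono (fun _ _ h => ⟨none, h⟩) _ _ h

theorem IStep.reflTransGen_aStep {X Y : SExp A} {a : A} (h : IStep X a Y) :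
    ReflTransGen AStep X Y :=
  let ⟨_, hXZ, hZY⟩ := h
  (reflTransGen_aStep_of_oneStep hXZ).tail ⟨some a, hZY⟩

theorem reflTransGen_aStep_of_bStep {X Y : SExp A} (h : ReflTransGen BStep X Y) :
    ReflTransGen AStep X Y :=
  ReflTransGen.mono (fun _ _ ⟨l, hl⟩ => ⟨l, hl.sStep⟩) _ _ h

theorem iTerm_or_normedP_of_reach {E F : SExp A} (h : ReflTransGen AStep E F) (hF : STerm F) :
    ITerm E ∨ NormedP E := by
  induction h using ReflTransGen.head_induction_on with
  | refl => exact .inl ⟨F, .refl, hF⟩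
  | @head E X hEX _ ih =>
      obtain ⟨_ | a, hEX⟩ := hEX
      · refine ih.imp (fun ⟨G, hXG, hG⟩ => ⟨G, .head hEX hXG, hG⟩)
          fun ⟨G, hXG, hG⟩ => ⟨G, ?_, hG⟩
        obtain ⟨Y, ⟨b, M, hXM, hMY⟩, hYG⟩ := TransGen.head'_iff.mp hXG
        exact TransGen.head'_iff.mpr ⟨Y, ⟨b, M, .head hEX hXM, hMY⟩, hYG⟩
      · have hEX : IStep E a X := ⟨E, .refl, hEX⟩
        exact .inr <| ih.elim (fun hX => ⟨X, .single ⟨a, hEX⟩, hX⟩)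
          fun ⟨G, hXG, hG⟩ => ⟨G, .head ⟨a, hEX⟩ hXG, hG⟩

theorem NormedP.of_sStep {X E F : SExp A} {a : A} (hXE : SStep X (some a) E)
    (hEF : ReflTransGen AStep E F) (hF : STerm F) : NormedP X := by
  have hXE : IStep X a E := ⟨X, .refl, hXE⟩
  rcases iTerm_or_normedP_of_reach hEF hF with hE | ⟨G, hEG, hG⟩
  exacts [⟨E, .single ⟨a, hXE⟩, hE⟩, ⟨G, .head ⟨a, hXE⟩ hEG, hG⟩]

def IsEntry (X : SExp A) (l : Option A) (Y : SExp A) : Prop :=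
  SStep X l Y ∧ ¬ MStep X (l, 0) Y

theorem IsEntry.pos_of_mStep {X Y : SExp A} {l : Option A} {m : ℕ} (h : IsEntry X l Y)
    (hm : MStep X (l, m) Y) : 0 < m :=
  Nat.pos_of_ne_zero fun h0 => h.2 (h0 ▸ hm)

theorem IsEntry.exists_mStep {X Y : SExp A} {l : Option A} (h : IsEntry X l Y) :
    ∃ m, 0 < m ∧ MStep X (l, m) Y :=
  let ⟨m, hm⟩ := h.1.exists_mStep
  ⟨m, h.pos_of_mStep hm, hm⟩

def BoNormed (X : SExp A) : Prop :=
  ∃ G, ReflTransGen BStep X G ∧ STerm G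

/-- A terminating body path from inside a loop must leave it through its exit, which lands
back on the loop's star expression. -/
theorem reflTransGen_bStep_fill_star {C : AppCtx A} {g : StExp A} {X G : SExp A}
    (h : ReflTransGen BStep X G) (hG : STerm G) :
    ∀ E, X = C.fill (st E g) → ReflTransGen BStep (C.fill (up (.star g))) G := by
  induction h using ReflTransGen.head_induction_on with
  | refl => rintro E rfl; exact absurd hG AppCtx.not_sTerm_fill_st
  | @head _ Z hXZ hZG ih =>
      rintro E rfl
      obtain ⟨l, hXZ⟩ := hXZ
      rcases AppCtx.sStep_fill_st hXZ.sStep with ⟨E', -, rfl⟩ | ⟨-, -, rfl⟩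
      exacts [ih E' rfl, hZG]

theorem BoNormed.of_sStep {X Y : SExp A} {l : Option A} (hX : Canonical X) (h : SStep X l Y)
    (hY : BoNormed Y) : BoNormed X := by
  obtain ⟨G, hYG, hG⟩ := hY
  by_cases hb : MStep X (l, 0) Y
  · exact ⟨G, .head ⟨l, hb⟩ hYG, hG⟩
  obtain ⟨m, hm0, hm⟩ := IsEntry.exists_mStep ⟨h, hb⟩
  obtain ⟨C, g, E, rfl, rfl, -⟩ := hm.exists_fill_star hX hm0
  exact ⟨G, reflTransGen_bStep_fill_star hYG hG E rfl, hG⟩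

theorem boNormed_of_reach {X F : SExp A} (hX : Canonical X) (h : ReflTransGen AStep X F)
    (hF : STerm F) : BoNormed X := by
  induction h using ReflTransGen.head_induction_on with
  | refl => exact ⟨F, .refl, hF⟩
  | head hXY _ ih => obtain ⟨_, hXY⟩ := hXY; exact .of_sStep hX hXY (ih hXY.canonical)

theorem NormedP.exists_sStep_boNormed {g : StExp A} (h : NormedP (up g)) :
    ∃ (a : A) (E : SExp A), SStep (up g) (some a) E ∧ BoNormed E := by
  obtain ⟨F, hgF, G, hFG, hG⟩ := h
  obtain ⟨E, ⟨a, M, hgM, hME⟩, hEF⟩ := TransGen.head'_iff.mp hgF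
  obtain rfl : M = up g := (reflTransGen_iff_eq fun _ => not_sStep_up_none).mp hgM
  refine ⟨a, E, hME, boNormed_of_reach hME.canonical ?_ hG⟩
  exact (reflTransGen_closed (fun _ _ ⟨_, hXY⟩ => hXY.reflTransGen_aStep) _ _ hEF).trans
    (reflTransGen_aStep_of_oneStep hFG)

theorem acc_bStep_pr {E : SExp A} {b : StExp A} (hE : Acc (flip BStep) E)
    (hb : ∀ l Y, SStep (up b) l Y → Acc (flip BStep) Y) : Acc (flip BStep) (pr E b) := by
  induction hE with
  | intro X _ ih =>
      constructor
      rintro Y ⟨l, h⟩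
      cases h with
      | prL h => exact ih _ ⟨l, h⟩
      | prR _ h => exact hb _ _ h.sStep

theorem acc_bStep_st {E : SExp A} {f : StExp A} (hE : Acc (flip BStep) E)
    (hf : Acc (flip BStep) (up (.star f))) : Acc (flip BStep) (st E f) := by
  induction hE with
  | intro X _ ih =>
      constructor
      rintro Y ⟨l, h⟩
      cases h with
      | stL h => exact ih _ ⟨l, h⟩
      | stOne => exact hf

theorem acc_bStep_st_of_not_boNormed {E : SExp A} {f : StExp A} (hE : Acc (flip BStep) E)
    (hn : ¬ BoNormed E) : Acc (flip BStep) (st E f) := by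
  induction hE with
  | intro X _ ih =>
      constructor
      rintro Y ⟨l, h⟩
      cases h with
      | stL h => exact ih _ ⟨l, h⟩ fun ⟨G, hG, hGt⟩ => hn ⟨G, .head ⟨l, h⟩ hG, hGt⟩
      | stOne ht => exact absurd ⟨X, .refl, ht⟩ hn

theorem acc_bStep_up_star {f : StExp A} (hf : ∀ l Y, SStep (up f) l Y → Acc (flip BStep) Y) :
    Acc (flip BStep) (up (.star f)) := by
  constructor
  rintro Y ⟨l, h⟩
  cases h with
  | upStarN hn h =>
      refine acc_bStep_st_of_not_boNormed (hf _ _ h.sStep) fun ⟨G, hG, hGt⟩ => hn ?_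
      exact NormedP.of_sStep h.sStep (reflTransGen_aStep_of_bStep hG) hGt

theorem acc_bStep_of_mem_derivatives (e : StExp A) :
    ∀ X ∈ derivatives e, Acc (flip BStep) X := by
  have acc_of_up : ∀ e : StExp A, (∀ X ∈ derivatives e, Acc (flip BStep) X) →
      ∀ l Y, SStep (up e) l Y → Acc (flip BStep) Y :=
    fun e ih _ _ h => ih _ (mem_derivatives_of_sStep (up_mem_derivatives e) h)
  induction e with
  | zero | one =>
      rintro X rfl
      exact ⟨_, fun _ ⟨_, h⟩ => by cases h⟩
  | act a =>
      have hone : Acc (flip BStep) (up (.one : StExp A)) := ⟨_, fun _ ⟨_, h⟩ => by cases h⟩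
      rintro X (rfl | rfl)
      · exact ⟨_, fun _ ⟨_, h⟩ => by cases h; exact hone⟩
      · exact hone
  | add e₁ e₂ ih₁ ih₂ =>
      rintro X (rfl | hX | hX)
      · constructor
        rintro Y ⟨l, h⟩
        cases h with
        | addL h => exact acc_of_up e₁ ih₁ _ _ h.sStep
        | addR h => exact acc_of_up e₂ ih₂ _ _ h.sStep
      · exact ih₁ X hX
      · exact ih₂ X hX
  | mul e₁ e₂ ih₁ ih₂ =>
      rintro X (rfl | ⟨E, hE, rfl⟩ | hX)
      · constructor
        rintro Y ⟨l, h⟩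
        cases h with
        | upMulL h => exact acc_bStep_pr (acc_of_up e₁ ih₁ _ _ h.sStep) (acc_of_up e₂ ih₂)
        | upMulR _ h => exact acc_of_up e₂ ih₂ _ _ h.sStep
      · exact acc_bStep_pr (ih₁ E hE) (acc_of_up e₂ ih₂)
      · exact ih₂ X hX
  | star f ih =>
      have hstar := acc_bStep_up_star (acc_of_up f ih)
      rintro X (rfl | ⟨E, hE, rfl⟩)
      · exact hstar
      · exact acc_bStep_st (ih E hE) hstar

theorem not_forall_bStep_of_mem_derivatives {e : StExp A} {p : ℕ → SExp A}
    (hp : p 0 ∈ derivatives e) : ¬ ∀ n, BStep (p n) (p (n + 1)) := fun h =>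
  (not_acc_iff_exists_descending_chain (r := flip BStep)).mpr ⟨p, rfl, h⟩
    (acc_bStep_of_mem_derivatives e _ hp)

def entryVerts (C : Chart (SExp A) (Option A)) : Set (SExp A) :=
  {x | ∃ l y, C.step x l y ∧ IsEntry x l y}

def entryLevels (C : Chart (SExp A) (Option A)) : Set ℕ :=
  {m | ∃ x l y, C.step x l y ∧ IsEntry x l y ∧ MStep x (l, m) y}

def entriesAt (C : Chart (SExp A) (Option A)) (v : SExp A) : Set (SExp A × Option A × SExp A) :=
  {t | t.1 = v ∧ C.step v t.2.1 t.2.2 ∧ IsEntry v t.2.1 t.2.2}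

def loopInterior (C : AppCtx A) (g : StExp A) : Set (SExp A) :=
  (fun E => C.fill (st E g)) '' {E | heightS E ≤ g.height}

/-- The charts obtained from `C1(e)` by eliminating all loop-entry transitions at some of its
vertices. -/
structure IsPruned (e : StExp A) (C : Chart (SExp A) (Option A)) : Prop where
  start_mem : C.start ∈ C.verts
  verts_subset : C.verts ⊆ SReach e
  sStep_of_step : ∀ {x l y}, C.step x l y → SStep x l y
  mem_of_step : ∀ {x l y}, C.step x l y → x ∈ C.verts ∧ y ∈ C.verts
  sTerm_of_term : ∀ {x}, C.term x → STerm x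
  step_of_mStep_zero : ∀ {x l y}, x ∈ C.verts → MStep x (l, 0) y → C.step x l y
  step_of_isEntry : ∀ {x l y}, x ∈ entryVerts C → IsEntry x l y → C.step x l y

theorem isPruned_oneChartInt (e : StExp A) : IsPruned e (oneChartInt e) where
  start_mem := .refl
  verts_subset := subset_rfl
  sStep_of_step h := h.2
  mem_of_step h := ⟨h.1, h.1.tail ⟨_, h.2⟩⟩
  sTerm_of_term h := h.2
  step_of_mStep_zero hx h := ⟨hx, h.sStep⟩
  step_of_isEntry := fun ⟨_, _, hx, _⟩ h => ⟨hx.1, h.1⟩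

theorem entryVerts_elim_entriesAt_subset (C : Chart (SExp A) (Option A)) (v : SExp A) :
    entryVerts (LEE.elim C (entriesAt C v)) ⊆ entryVerts C \ {v} := by
  rintro x ⟨l, y, ⟨⟨hstep, hU⟩, -⟩, hent⟩
  exact ⟨⟨l, y, hstep, hent⟩, by rintro rfl; exact hU ⟨rfl, hstep, hent⟩⟩

namespace IsPruned

variable {e : StExp A} {C : Chart (SExp A) (Option A)}

theorem mem_derivatives (hC : IsPruned e C) {x : SExp A} (hx : x ∈ C.verts) :
    x ∈ derivatives e :=
  sReach_subset_derivatives e (hC.verts_subset hx)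

theorem canonical (hC : IsPruned e C) {x : SExp A} (hx : x ∈ C.verts) : Canonical x :=
  canonical_of_mem_sReach (hC.verts_subset hx)

theorem entryVerts_finite (hC : IsPruned e C) : (entryVerts C).Finite :=
  (derivatives_finite e).subset fun _ ⟨_, _, h, _⟩ => hC.mem_derivatives (hC.mem_of_step h).1

theorem not_hasInfPath (hC : IsPruned e C) (h : entryVerts C = ∅) : ¬ LEE.HasInfPath C := by
  rintro ⟨p, hp0, hp⟩
  refine not_forall_bStep_of_mem_derivatives (hC.mem_derivatives hp0) fun n => ?_
  obtain ⟨l, hl⟩ := hp n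
  by_contra hb
  exact h.subset ⟨l, _, hl, hC.sStep_of_step hl, fun hm => hb ⟨l, hm⟩⟩

theorem isTrap (hC : IsPruned e C) (Ctx : AppCtx A) (g : StExp A) :
    LEE.IsTrap C (Ctx.fill (up (.star g))) (entriesAt C (Ctx.fill (up (.star g))))
      (loopInterior Ctx g) where
  not_mem := fun ⟨_, _, h⟩ => AppCtx.fill_st_ne_fill_up h
  mem_of_entry := by
    rintro l u ⟨-, hstep, hent⟩
    obtain ⟨m, hm0, hm⟩ := hent.exists_mStep
    obtain ⟨Ctx', g', E, hv, rfl, -, -, hE⟩ :=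
      hm.exists_fill_star (hC.canonical (hC.mem_of_step hstep).1) hm0
    obtain ⟨rfl, hg⟩ := AppCtx.fill_up_inj hv
    cases hg
    exact ⟨E, hE, rfl⟩
  mem_or_eq_of_step := by
    rintro _ ⟨E, hE, rfl⟩ l y hstep
    rcases AppCtx.sStep_fill_st (hC.sStep_of_step hstep) with ⟨E', hs, rfl⟩ | ⟨-, -, rfl⟩
    exacts [.inl ⟨E', hs.heightS_le.trans hE, rfl⟩, .inr rfl]

/-- Loop-entries inside the loop of `g*` have level at most `g.height`, below the assumed least
level. -/
theorem bStep_of_step_of_mem_loopInterior (hC : IsPruned e C) {Ctx : AppCtx A} {g : StExp A}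
    (hmin : ∀ m ∈ entryLevels C, g.height + 1 ≤ m) {x y : SExp A} {l : Option A}
    (hx : x ∈ loopInterior Ctx g) (h : C.step x l y) : BStep x y := by
  by_contra hb
  obtain ⟨E, hE, rfl⟩ := hx
  have hent : IsEntry _ l y := ⟨hC.sStep_of_step h, fun hm => hb ⟨l, hm⟩⟩
  obtain ⟨m, -, hm⟩ := hent.exists_mStep
  have hlev := hmin m ⟨_, l, y, h, hent, hm⟩
  have hE : heightS E ≤ g.height := hE
  have hm : m ≤ heightS E := AppCtx.mStep_fill_st_snd_le hm
  omega

/-- The loop at a normed⁺ star can be run through: enter it, follow body transitions to a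
terminating iterate of the body, and exit. -/
theorem exists_infPath_genSubchart (hC : IsPruned e C) {Ctx : AppCtx A} {g : StExp A}
    (hv : Ctx.fill (up (.star g)) ∈ entryVerts C) (hg : NormedP (up g)) :
    ∃ p, IsInfPathFrom
      (LEE.genSubchart C (Ctx.fill (up (.star g))) (entriesAt C (Ctx.fill (up (.star g))))) p := by
  obtain ⟨a, E, hgE, G, hEG, hG⟩ := hg.exists_sStep_boNormed
  have hent : IsEntry (Ctx.fill (up (.star g))) (some a) (Ctx.fill (st E g)) :=
    ⟨(SStep.upStar hgE).fill Ctx, AppCtx.not_mStep_fill_star_zero hg⟩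
  have hvE := hC.step_of_isEntry hv hent
  have hpath : ∀ E', ReflTransGen BStep E E' →
      ReflTransGen (fun x y => (∃ l, C.step x l y) ∧ x ≠ Ctx.fill (up (.star g)))
        (Ctx.fill (st E g)) (Ctx.fill (st E' g)) ∧ Ctx.fill (st E' g) ∈ C.verts := by
    intro E' hEE'
    induction hEE' with
    | refl => exact ⟨.refl, (hC.mem_of_step hvE).2⟩
    | tail _ hE' ih =>
        obtain ⟨l, hm⟩ := hE'
        have hstep := hC.step_of_mStep_zero ih.2 ((MStep.stL hm).fill Ctx)
        exact ⟨ih.1.tail ⟨⟨l, hstep⟩, AppCtx.fill_st_ne_fill_up⟩, (hC.mem_of_step hstep).2⟩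
  obtain ⟨hEG, hGmem⟩ := hpath G hEG
  exact LEE.exists_infPath_genSubchart ⟨rfl, hvE, hent⟩ hEG AppCtx.fill_st_ne_fill_up
    (hC.step_of_mStep_zero hGmem ((MStep.stOne hG).fill Ctx))

theorem isLoopSubchart (hC : IsPruned e C) {v y : SExp A} {l : Option A} {n : ℕ}
    (hv : C.step v l y) (hent : IsEntry v l y) (hlev : MStep v (l, n) y)
    (hmin : ∀ m ∈ entryLevels C, n ≤ m) : LEE.IsLoopSubchart C v (entriesAt C v) := by
  obtain ⟨Ctx, g, -, rfl, -, rfl, hg, -⟩ :=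
    hlev.exists_fill_star (hC.canonical (hC.mem_of_step hv).1) (hent.pos_of_mStep hlev)
  refine ⟨(hC.mem_of_step hv).1, ⟨(_, l, y), rfl, hv, hent⟩,
    fun t ⟨ht, hstep, _⟩ => ⟨ht, ht ▸ hstep⟩,
    (hC.isTrap Ctx g).isLoopChart ?_ ?_ (hC.exists_infPath_genSubchart ⟨l, y, hv, hent⟩ hg)⟩
  · rintro _ ⟨E, -, rfl⟩ ht
    exact AppCtx.not_sTerm_fill_st (hC.sTerm_of_term ht)
  · intro p hp hsteps
    choose l hsteps using hsteps
    exact not_forall_bStep_of_mem_derivatives (hC.mem_derivatives (hC.mem_of_step (hsteps 0)).1)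
      fun n => hC.bStep_of_step_of_mem_loopInterior hmin (hp n) (hsteps n)

theorem elim_entriesAt (hC : IsPruned e C) (v : SExp A) :
    IsPruned e (LEE.elim C (entriesAt C v)) where
  start_mem := ⟨hC.start_mem, .refl⟩
  verts_subset _ hx := hC.verts_subset hx.1
  sStep_of_step h := hC.sStep_of_step h.1.1
  mem_of_step h :=
    ⟨⟨(hC.mem_of_step h.1.1).1, h.2.1⟩, ⟨(hC.mem_of_step h.1.1).2, h.2.2⟩⟩
  sTerm_of_term h := hC.sTerm_of_term h.1
  step_of_mStep_zero hx h :=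
    LEE.elim_step_of_step hx (hC.step_of_mStep_zero hx.1 h)
      fun ⟨hxv, _, hent⟩ => hent.2 (hxv ▸ h)
  step_of_isEntry := by
    rintro x l y ⟨l₁, y₁, ⟨⟨hstep₁, hU₁⟩, hxR, -⟩, hent₁⟩ hent
    have hxv : x ≠ v := by rintro rfl; exact hU₁ ⟨rfl, hstep₁, hent₁⟩
    exact LEE.elim_step_of_step ⟨(hC.mem_of_step hstep₁).1, hxR⟩
      (hC.step_of_isEntry ⟨l₁, y₁, hstep₁, hent₁⟩ hent) fun hU => hxv hU.1

theorem exists_elim (hC : IsPruned e C) :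
    ∃ C', ReflTransGen LEE.ElimStep C C' ∧ ¬ LEE.HasInfPath C' := by
  induction hn : (entryVerts C).ncard using Nat.strong_induction_on generalizing C with
  | _ n ih =>
  rcases (entryVerts C).eq_empty_or_nonempty with h | ⟨v, l, y, hv, hent⟩
  · exact ⟨C, .refl, hC.not_hasInfPath h⟩
  obtain ⟨m, -, hm⟩ := hent.exists_mStep
  have hlevels : (entryLevels C).Nonempty := ⟨m, v, l, y, hv, hent, hm⟩
  obtain ⟨v, l, y, hv, hent, hlev⟩ := Nat.sInf_mem hlevels
  have hstep : LEE.ElimStep C (LEE.elim C (entriesAt C v)) :=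
    ⟨v, _, hC.isLoopSubchart hv hent hlev fun m hm => Nat.sInf_le hm, rfl⟩
  have hlt : (entryVerts (LEE.elim C (entriesAt C v))).ncard < n := hn ▸
    Set.ncard_lt_ncard ((entryVerts_elim_entriesAt_subset C v).trans_ssubset
      (Set.sdiff_singleton_ssubset.2 ⟨l, y, hv, hent⟩)) hC.entryVerts_finite
  obtain ⟨C', hC', hno⟩ := ih _ hlt (hC.elim_entriesAt v) rfl
  exact ⟨C', .head hstep hC', hno⟩

end IsPruned

end SExp

/-- For every star expression `e`, the 1-chart interpretation
`C1(e)` satisfies the loop existence and elimination property LEE. -/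
theorem onechart_satisfies_LEE {A : Type u} (e : StExp A) :
    LEE.SatisfiesLEE (oneChartInt e) :=
  (SExp.isPruned_oneChartInt e).exists_elim
end

section
/- The projection function π defines a bisimulation between the induced LTS of the stacked star expressions 1-LTS L1(StExp^(*)(A)) and the star expressions LTS L(StExp(A)); that is, the graph of π is a bisimulation between these two LTSs. -/
universe u v w

/-!
A `1`-transition only discharges a terminated stacked factor, turning `E₁ * e*` with `E₁↓`
into `e*` (possibly under `·` and `*`). As `π(E₁ * e*) = π(E₁) · e*` with `π(E₁)↓`, whenever
`E →1 F` the expression `π(E)` inherits every transition and the termination of `π(F)`; hence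
induced transitions and induced termination project. Conversely, a transition or termination
of `π(E)` that relies on `π(E₁)↓` for a stacked factor `E₁` is realized by first driving `E₁`
to a terminating expression along `1`-transitions.
-/

namespace SExp

variable {A : Type u}

open Relation StExp

theorem STerm.term_proj {E : SExp A} (h : STerm E) : Term E.proj := by
  induction h with
  | up h => exact h
  | pr _ h₂ ih => exact Term.mul ih h₂

theorem SStep.step_proj {E E' : SExp A} {a : A} (h : SStep E (some a) E') :
    Step E.proj a E'.proj := by
  generalize hl : some a = l at h
  induction h with
  | act => cases hl; exact Step.act
  | addL _ ih => exact Step.addL (ih hl)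
  | addR _ ih => exact Step.addR (ih hl)
  | upMulL _ ih => exact Step.mulL (ih hl)
  | upMulR h₁ _ ih => exact Step.mulR h₁ (ih hl)
  | upStar _ ih => cases hl; exact Step.star (ih rfl)
  | prL _ ih => exact Step.mulL (ih hl)
  | prR h₁ _ ih => exact Step.mulR h₁.term_proj (ih hl)
  | stL _ ih => exact Step.mulL (ih hl)
  | stOne => cases hl

theorem OneStep.term_proj {E F : SExp A} (h : OneStep E F) (hF : Term F.proj) :
    Term E.proj := by
  unfold OneStep at h
  generalize hl : none = l at h
  induction h with
  | act | addL | addR | upMulR | upStar | prR => cases hl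
  | upMulL _ ih | prL _ ih | stL _ ih =>
      cases hF with
      | mul h₁ h₂ => exact Term.mul (ih h₁ hl) h₂
  | stOne h₁ => exact Term.mul h₁.term_proj Term.star

theorem OneStep.step_proj {E F : SExp A} {a : A} {g : StExp A} (h : OneStep E F)
    (hF : Step F.proj a g) : Step E.proj a g := by
  unfold OneStep at h
  generalize hl : none = l at h
  induction h generalizing g with
  | act | addL | addR | upMulR | upStar | prR => cases hl
  | upMulL hstep ih | prL hstep ih | stL hstep ih =>
      subst hl
      cases hF with
      | mulL hF => exact Step.mulL (ih hF rfl)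
      | mulR h₁ hF => exact Step.mulR (OneStep.term_proj hstep h₁) hF
  | stOne h₁ => exact Step.mulR h₁.term_proj hF

theorem ITerm.term_proj {E : SExp A} (h : ITerm E) : Term E.proj := by
  obtain ⟨F, hEF, hF⟩ := h
  induction hEF using ReflTransGen.head_induction_on with
  | refl => exact hF.term_proj
  | head hstep _ ih => exact hstep.term_proj ih

theorem IStep.step_proj {E E' : SExp A} {a : A} (h : IStep E a E') :
    Step E.proj a E'.proj := by
  obtain ⟨F, hEF, hF⟩ := h
  induction hEF using ReflTransGen.head_induction_on with
  | refl => exact hF.step_proj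
  | head hstep _ ih => exact hstep.step_proj ih

theorem exists_sStep_up_of_step {e e' : StExp A} {a : A} (h : Step e a e') :
    ∃ E', SStep (up e) (some a) E' ∧ E'.proj = e' := by
  induction h with
  | act => exact ⟨up StExp.one, SStep.act, rfl⟩
  | addL _ ih =>
      obtain ⟨E', hE', rfl⟩ := ih
      exact ⟨E', SStep.addL hE', rfl⟩
  | addR _ ih =>
      obtain ⟨E', hE', rfl⟩ := ih
      exact ⟨E', SStep.addR hE', rfl⟩
  | mulL _ ih =>
      obtain ⟨E', hE', rfl⟩ := ih
      exact ⟨pr E' _, SStep.upMulL hE', rfl⟩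
  | mulR h₁ _ ih =>
      obtain ⟨E', hE', rfl⟩ := ih
      exact ⟨E', SStep.upMulR h₁ hE', rfl⟩
  | star _ ih =>
      obtain ⟨E', hE', rfl⟩ := ih
      exact ⟨st E' _, SStep.upStar hE', rfl⟩

theorem reflTransGen_oneStep_pr {E F : SExp A} (e : StExp A) (h : ReflTransGen OneStep E F) :
    ReflTransGen OneStep (pr E e) (pr F e) :=
  h.lift (pr · e) fun _ _ => SStep.prL

theorem reflTransGen_oneStep_st {E F : SExp A} (e : StExp A) (h : ReflTransGen OneStep E F) :
    ReflTransGen OneStep (st E e) (st F e) :=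
  h.lift (st · e) fun _ _ => SStep.stL

theorem ITerm.reflTransGen_oneStep_star {E : SExp A} (h : ITerm E) (e : StExp A) :
    ReflTransGen OneStep (st E e) (up (StExp.star e)) := by
  obtain ⟨F, hEF, hF⟩ := h
  exact (reflTransGen_oneStep_st e hEF).tail (SStep.stOne hF)

theorem ITerm.of_term_proj {E : SExp A} (h : Term E.proj) : ITerm E := by
  induction E with
  | up e => exact ⟨up e, .refl, STerm.up h⟩
  | pr E₁ e₂ ih =>
      obtain ⟨h₁, h₂⟩ : Term E₁.proj ∧ Term e₂ := by cases h; constructor <;> assumption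
      obtain ⟨F₁, hEF, hF⟩ := ih h₁
      exact ⟨pr F₁ e₂, reflTransGen_oneStep_pr e₂ hEF, STerm.pr hF h₂⟩
  | st E₁ e₂ ih =>
      have h₁ : Term E₁.proj := by cases h; assumption
      exact ⟨_, (ih h₁).reflTransGen_oneStep_star e₂, STerm.up Term.star⟩

theorem IStep.pr {E E' : SExp A} {a : A} (h : IStep E a E') (e : StExp A) :
    IStep (SExp.pr E e) a (SExp.pr E' e) := by
  obtain ⟨F, hEF, hF⟩ := h
  exact ⟨SExp.pr F e, reflTransGen_oneStep_pr e hEF, SStep.prL hF⟩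

theorem IStep.st {E E' : SExp A} {a : A} (h : IStep E a E') (e : StExp A) :
    IStep (SExp.st E e) a (SExp.st E' e) := by
  obtain ⟨F, hEF, hF⟩ := h
  exact ⟨SExp.st F e, reflTransGen_oneStep_st e hEF, SStep.stL hF⟩

theorem exists_iStep_of_step_proj {E : SExp A} {a : A} {e' : StExp A}
    (h : Step E.proj a e') : ∃ E', IStep E a E' ∧ E'.proj = e' := by
  induction E generalizing e' with
  | up e =>
      obtain ⟨E', hE', rfl⟩ := exists_sStep_up_of_step h
      exact ⟨E', ⟨up e, .refl, hE'⟩, rfl⟩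
  | pr E₁ e₂ ih =>
      cases h with
      | mulL h =>
          obtain ⟨E₁', hE₁', rfl⟩ := ih h
          exact ⟨pr E₁' e₂, hE₁'.pr e₂, rfl⟩
      | mulR h₁ h =>
          obtain ⟨F₁, hEF, hF⟩ := ITerm.of_term_proj h₁
          obtain ⟨E', hE', rfl⟩ := exists_sStep_up_of_step h
          exact ⟨E', ⟨pr F₁ e₂, reflTransGen_oneStep_pr e₂ hEF, SStep.prR hF hE'⟩, rfl⟩
  | st E₁ e₂ ih =>
      cases h with
      | mulL h =>
          obtain ⟨E₁', hE₁', rfl⟩ := ih h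
          exact ⟨st E₁' e₂, hE₁'.st e₂, rfl⟩
      | mulR h₁ h =>
          obtain ⟨E', hE', rfl⟩ := exists_sStep_up_of_step h
          exact ⟨E', ⟨_, (ITerm.of_term_proj h₁).reflTransGen_oneStep_star e₂, hE'⟩, rfl⟩

end SExp

/-- The projection function `π` defines a bisimulation between the
induced LTS of the stacked star expressions 1-LTS `L1(StExp^(*)(A))` and the
star expressions LTS `L(StExp(A))`. -/
theorem proj_defines_bisimulation (A : Type u) :
    IsBisimulation (indSExpLTS A) (stexpLTS A) (fun E f => SExp.proj E = f) := by
  refine ⟨⟨.up .one, .one, rfl⟩, ?_⟩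
  rintro E _ rfl
  exact ⟨fun _ E' h => ⟨E'.proj, h.step_proj, rfl⟩,
    fun _ _ h => SExp.exists_iStep_of_step_proj h,
    ⟨SExp.ITerm.term_proj, SExp.ITerm.of_term_proj⟩⟩
end
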